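/- arXiv:2501.10263 — 3 statements merged into one kernel-verified Lean document; each statement's English description precedes it below -/
import Mathlib

section
/- Let X be a random real p×k matrix (a measurable map from a probability space to the space of p×k real matrices) such that XᵀX is positive definite almost surely. Let L be a fixed p×p orthogonal matrix and R a fixed k×k orthogonal matrix, and suppose LXR has the same distribution as X (the pushforward laws agree). Then L Q_X R has the same distribution as Q_X, where Q_X = X(XᵀX)^{-1/2} is the polar factor of X. -/
open Matrix

/-- `XᵀX` is always positive semidefinite for a real matrix `X`. -/
lemma posSemidef_transpose_mul_self {p k : ℕ} (X : Matrix (Fin p) (Fin k) ℝ) :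
    (Xᵀ * X).PosSemidef := by
  rw [← Matrix.conjTranspose_eq_transpose_of_trivial]
  exact Matrix.posSemidef_conjTranspose_mul_self X

open scoped MatrixOrder in
/-- The polar factor `Q_X = X (XᵀX)^{-1/2}` of a real `p × k` matrix `X`, where
`(XᵀX)^{-1/2}` is the inverse of the unique symmetric positive semidefinite square root
of `XᵀX`. -/
noncomputable def polarFactor {p k : ℕ} (X : Matrix (Fin p) (Fin k) ℝ) :
    Matrix (Fin p) (Fin k) ℝ :=
  X * (CFC.sqrt (Xᵀ * X))⁻¹


open MeasureTheory

noncomputable instance matrixMeasurableSpace {p k : ℕ} :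
    MeasurableSpace (Matrix (Fin p) (Fin k) ℝ) :=
  show MeasurableSpace ((Fin p) → (Fin k) → ℝ) from inferInstance

/-! The polar factor is orthogonally equivariant, `Q_{LXR} = L Q_X R` for every `X`: indeed
`(LXR)ᵀ(LXR) = Rᵀ (XᵀX) R`, and conjugation by an orthogonal matrix commutes with the positive
square root (by uniqueness of the latter) and with inversion. So `L Q_X R` is the image of `LXR`
under the measurable map `X ↦ Q_X`, and `LXR` has the law of `X`. -/

open scoped MatrixOrder

instance {p k : ℕ} : BorelSpace (Matrix (Fin p) (Fin k) ℝ) :=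
  inferInstanceAs (BorelSpace (Fin p → Fin k → ℝ))

instance {p k : ℕ} : SecondCountableTopology (Matrix (Fin p) (Fin k) ℝ) :=
  inferInstanceAs (SecondCountableTopology (Fin p → Fin k → ℝ))

namespace CFC

lemma sqrt_star_mul_mul_of_mem_unitary {A : Type*} [PartialOrder A] [Ring A]
    [TopologicalSpace A] [StarRing A] [Algebra ℝ A] [StarOrderedRing A]
    [ContinuousFunctionalCalculus ℝ A IsSelfAdjoint] [NonnegSpectrumClass ℝ A]
    [IsSemitopologicalRing A] [T2Space A] {u : A} (hu : u ∈ unitary A) {a : A} (ha : 0 ≤ a) :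
    sqrt (star u * a * u) = star u * sqrt a * u := by
  refine sqrt_unique ?_ (star_left_conjugate_nonneg (sqrt_nonneg a) u)
  calc star u * sqrt a * u * (star u * sqrt a * u)
      = star u * sqrt a * (u * star u) * sqrt a * u := by noncomm_ring
    _ = star u * a * u := by
      rw [Unitary.mul_star_self_of_mem hu, mul_one, mul_assoc (star u), sqrt_mul_sqrt_self a]

end CFC

lemma Matrix.measurable_inv {k : ℕ} :
    Measurable fun A : Matrix (Fin k) (Fin k) ℝ => A⁻¹ := by
  simp_rw [Matrix.inv_def, Ring.inverse_eq_inv']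
  exact (continuous_id.matrix_det.measurable.inv).smul continuous_id.matrix_adjugate.measurable

lemma continuous_sqrt_transpose_mul_self {p k : ℕ} :
    Continuous fun X : Matrix (Fin p) (Fin k) ℝ => CFC.sqrt (Xᵀ * X) := by
  have hsqrt : ContinuousOn (CFC.sqrt : Matrix (Fin k) (Fin k) ℝ → _) {A | 0 ≤ A} := by
    -- a C⋆-norm is needed here; the L2 operator norm induces the product topology
    open scoped Matrix.Norms.L2Operator in exact CFC.continuousOn_sqrt
  exact hsqrt.comp_continuous (continuous_id.matrix_transpose.matrix_mul continuous_id)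
    fun X => (posSemidef_transpose_mul_self X).nonneg

lemma measurable_polarFactor {p k : ℕ} :
    Measurable (polarFactor : Matrix (Fin p) (Fin k) ℝ → _) :=
  (continuous_fst.matrix_mul continuous_snd).measurable.comp
    (measurable_id.prodMk
      (Matrix.measurable_inv.comp continuous_sqrt_transpose_mul_self.measurable))

lemma transpose_mul_self_mul_mul_of_mem_orthogonalGroup {p k : ℕ} (X : Matrix (Fin p) (Fin k) ℝ)
    {L : Matrix (Fin p) (Fin p) ℝ} (hL : L ∈ orthogonalGroup (Fin p) ℝ)
    (R : Matrix (Fin k) (Fin k) ℝ) :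
    (L * X * R)ᵀ * (L * X * R) = star R * (Xᵀ * X) * R := by
  have hL' : Lᵀ * L = 1 := Unitary.star_mul_self_of_mem hL
  rw [star_eq_conjTranspose, conjTranspose_eq_transpose_of_trivial]
  simp only [transpose_mul, Matrix.mul_assoc]
  rw [← Matrix.mul_assoc Lᵀ, hL', Matrix.one_mul]

lemma polarFactor_mul_mul_of_mem_orthogonalGroup {p k : ℕ} (X : Matrix (Fin p) (Fin k) ℝ)
    {L : Matrix (Fin p) (Fin p) ℝ} (hL : L ∈ orthogonalGroup (Fin p) ℝ)
    {R : Matrix (Fin k) (Fin k) ℝ} (hR : R ∈ orthogonalGroup (Fin k) ℝ) :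
    polarFactor (L * X * R) = L * polarFactor X * R := by
  have hRR : R * star R = 1 := Unitary.mul_star_self_of_mem hR
  rw [polarFactor, transpose_mul_self_mul_mul_of_mem_orthogonalGroup X hL,
    CFC.sqrt_star_mul_mul_of_mem_unitary hR (posSemidef_transpose_mul_self X).nonneg,
    Matrix.mul_inv_rev, Matrix.mul_inv_rev, inv_eq_left_inv (Unitary.star_mul_self_of_mem hR),
    inv_eq_left_inv hRR, polarFactor]
  simp only [Matrix.mul_assoc]
  rw [← Matrix.mul_assoc R, hRR, Matrix.one_mul]

theorem polarFactor_distribution_invariance_general {p k : ℕ}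
    {Ω : Type*} [MeasurableSpace Ω] (μ : Measure Ω)
    (X : Ω → Matrix (Fin p) (Fin k) ℝ) (hXmeas : Measurable X)
    (L : Matrix (Fin p) (Fin p) ℝ) (hL : L ∈ Matrix.orthogonalGroup (Fin p) ℝ)
    (R : Matrix (Fin k) (Fin k) ℝ) (hR : R ∈ Matrix.orthogonalGroup (Fin k) ℝ)
    (hinv : Measure.map (fun ω => L * X ω * R) μ = Measure.map X μ) :
    Measure.map (fun ω => L * polarFactor (X ω) * R) μ
      = Measure.map (fun ω => polarFactor (X ω)) μ := by
  have hLXR : Measurable fun ω => L * X ω * R :=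
    ((continuous_const.matrix_mul continuous_id).matrix_mul continuous_const).measurable.comp
      hXmeas
  calc Measure.map (fun ω => L * polarFactor (X ω) * R) μ
      = Measure.map (polarFactor ∘ fun ω => L * X ω * R) μ := by
        simp_rw [Function.comp_def, polarFactor_mul_mul_of_mem_orthogonalGroup _ hL hR]
    _ = Measure.map polarFactor (Measure.map X μ) := by
        rw [← Measure.map_map measurable_polarFactor hLXR, hinv]
    _ = Measure.map (fun ω => polarFactor (X ω)) μ :=
        Measure.map_map measurable_polarFactor hXmeas

/-- Let `X` be a random real `p × k` matrix with `XᵀX` positive definite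
almost surely, and let `L`, `R` be fixed orthogonal matrices such that `LXR` has the same
distribution as `X`. Then `L Q_X R` has the same distribution as `Q_X`. -/
theorem polarFactor_distribution_invariance {p k : ℕ}
    {Ω : Type*} [MeasurableSpace Ω] (μ : Measure Ω) [IsProbabilityMeasure μ]
    (X : Ω → Matrix (Fin p) (Fin k) ℝ) (hXmeas : Measurable X)
    (hXpd : ∀ᵐ ω ∂μ, ((X ω)ᵀ * X ω).PosDef)
    (L : Matrix (Fin p) (Fin p) ℝ) (hL : L ∈ Matrix.orthogonalGroup (Fin p) ℝ)
    (R : Matrix (Fin k) (Fin k) ℝ) (hR : R ∈ Matrix.orthogonalGroup (Fin k) ℝ)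
    (hinv : Measure.map (fun ω => L * X ω * R) μ = Measure.map X μ) :
    Measure.map (fun ω => L * polarFactor (X ω) * R) μ
      = Measure.map (fun ω => polarFactor (X ω)) μ :=
  polarFactor_distribution_invariance_general μ X hXmeas L hL R hR hinv
end

section
/- For every ℓ ∈ (0,1) and every real z ≠ 0, the Gaussian scale-mixture integral identity holds: ∫_0^1 √(ℓ/(2πθ)) · exp(−ℓz²/(2θ)) · θ^{ℓ/2−1}(1−θ)^{(1−ℓ)/2−1}/B(ℓ/2,(1−ℓ)/2) dθ = ((ℓ/2)^{ℓ/2}/Γ(ℓ/2)) · |z|^{ℓ−1} · exp(−ℓz²/2), where B is the Beta function and Γ the Gamma function. Equivalently: if θ ∼ Beta(ℓ/2,(1−ℓ)/2) and Z | θ ∼ Normal(0, θ/ℓ), then Z has density f(z|ℓ) = ((ℓ/2)^{ℓ/2}/Γ(ℓ/2))·|z|^{ℓ−1}·exp(−ℓz²/2). -/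
/-!
With `q = (1 - ℓ)/2` and `c = ℓ z² / 2`, the integrand is a constant times
`θ^(-q-1) (1-θ)^(q-1) exp(-c/θ)`. The substitution `θ = 1/(1+u)` makes all powers of `1 + u`
cancel against the Jacobian, leaving `exp(-c) u^(q-1) exp(-c u)`, whose integral over `(0, ∞)` is
`Γ(q) c^(-q) exp(-c)`. Since `ℓ/2 + q = 1/2`, the Beta constant is `Γ(ℓ/2) Γ(q) / √π`, so `Γ(q)`
cancels and the powers of `ℓ/2` combine into `(ℓ/2)^(ℓ/2)`.
-/

open Real MeasureTheory

noncomputable def realBeta (a b : ℝ) : ℝ := Gamma a * Gamma b / Gamma (a + b)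

open Set

lemma realBeta_of_add_eq_half {a b : ℝ} (hab : a + b = 1 / 2) :
    realBeta a b = Gamma a * Gamma b / √π := by
  rw [realBeta, hab, Gamma_one_half_eq]

lemma image_inv_one_add_Ioi : (fun u : ℝ => (1 + u)⁻¹) '' Ioi 0 = Ioo 0 1 := by
  ext θ
  simp only [mem_image, mem_Ioi, mem_Ioo]
  constructor
  · rintro ⟨u, hu, rfl⟩
    exact ⟨by positivity, inv_lt_one_of_one_lt₀ (by linarith)⟩
  · rintro ⟨h0, h1⟩
    refine ⟨θ⁻¹ - 1, by linarith [one_lt_inv_iff₀.mpr ⟨h0, h1⟩], ?_⟩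
    simp

lemma integral_Ioo_zero_one_eq_integral_Ioi (f : ℝ → ℝ) :
    ∫ θ in Ioo 0 1, f θ = ∫ u in Ioi 0, ((1 + u) ^ 2)⁻¹ * f (1 + u)⁻¹ := by
  have hderiv : ∀ u ∈ Ioi (0 : ℝ),
      HasDerivWithinAt (fun u => (1 + u)⁻¹) (-1 / (1 + u) ^ 2) (Ioi 0) u := fun u hu =>
    (((hasDerivAt_id' u).const_add 1).inv (by have := mem_Ioi.mp hu; positivity)).hasDerivWithinAt
  have hinj : InjOn (fun u : ℝ => (1 + u)⁻¹) (Ioi 0) := fun a _ b _ h => by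
    simpa using h
  rw [← image_inv_one_add_Ioi,
    integral_image_eq_integral_abs_deriv_smul measurableSet_Ioi hderiv hinj]
  refine setIntegral_congr_fun measurableSet_Ioi fun u hu => ?_
  rw [neg_div, abs_neg, abs_of_pos (by have := mem_Ioi.mp hu; positivity), smul_eq_mul, one_div]

lemma integral_rpow_mul_one_sub_rpow_mul_exp_neg_div {q c : ℝ} (hq : 0 < q) (hc : 0 < c) :
    ∫ θ in Ioo 0 1, θ ^ (-(q + 1)) * (1 - θ) ^ (q - 1) * exp (-c / θ)
      = Gamma q / c ^ q * exp (-c) := by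
  have hsubst : ∀ u ∈ Ioi (0 : ℝ), ((1 + u) ^ 2)⁻¹ * ((1 + u)⁻¹ ^ (-(q + 1))
      * (1 - (1 + u)⁻¹) ^ (q - 1) * exp (-c / (1 + u)⁻¹))
        = exp (-c) * (u ^ (q - 1) * exp (-(c * u))) := fun u (hu : 0 < u) => by
    have h1u : 0 < 1 + u := by linarith
    have hsub : 1 - (1 + u)⁻¹ = u / (1 + u) := by field_simp; ring
    have hpow : (1 + u) ^ (q + 1) = (1 + u) ^ (q - 1) * (1 + u) ^ 2 := by
      rw [show q + 1 = (q - 1) + 2 by ring, rpow_add h1u, rpow_two]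
    have hexp : exp (-c / (1 + u)⁻¹) = exp (-c) * exp (-(c * u)) := by
      rw [div_inv_eq_mul, ← exp_add]; ring_nf
    rw [inv_rpow h1u.le, rpow_neg h1u.le, inv_inv, hsub, div_rpow hu.le h1u.le, hpow, hexp]
    have : 0 < (1 + u) ^ (q - 1) := by positivity
    field_simp
  rw [integral_Ioo_zero_one_eq_integral_Ioi, setIntegral_congr_fun measurableSet_Ioi hsubst,
    integral_const_mul, integral_rpow_mul_exp_neg_mul_Ioi hq hc, one_div, inv_rpow hc.le]
  ring

lemma scale_mixture_integrand_eq (ℓ z b : ℝ) {θ : ℝ} (hθ : 0 < θ) :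
    √(ℓ / (2 * π * θ)) * exp (-(ℓ * z ^ 2) / (2 * θ))
        * (θ ^ (ℓ / 2 - 1) * (1 - θ) ^ ((1 - ℓ) / 2 - 1) / b)
      = √(ℓ / (2 * π)) / b
        * (θ ^ (-((1 - ℓ) / 2 + 1)) * (1 - θ) ^ ((1 - ℓ) / 2 - 1) * exp (-(ℓ * z ^ 2 / 2) / θ)) := by
  rw [show ℓ / (2 * π * θ) = ℓ / (2 * π) / θ by ring, sqrt_div' _ hθ.le, sqrt_eq_rpow θ,
    show -((1 - ℓ) / 2 + 1) = (ℓ / 2 - 1) - 1 / 2 by ring, rpow_sub hθ (ℓ / 2 - 1),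
    show -(ℓ * z ^ 2) / (2 * θ) = -(ℓ * z ^ 2 / 2) / θ by ring]
  ring

/-- For `ℓ ∈ (0,1)` and `z ≠ 0`, the Gaussian scale-mixture identity
`∫_0^1 √(ℓ/(2πθ)) exp(−ℓz²/(2θ)) θ^{ℓ/2−1} (1−θ)^{(1−ℓ)/2−1} / B(ℓ/2,(1−ℓ)/2) dθ
  = ((ℓ/2)^{ℓ/2}/Γ(ℓ/2)) |z|^{ℓ−1} exp(−ℓz²/2)` holds: if `θ ∼ Beta(ℓ/2,(1−ℓ)/2)` and
`Z | θ ∼ Normal(0, θ/ℓ)`, then `Z` has density `f(·|ℓ)`. -/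
theorem gaussian_scale_mixture_density (ℓ : ℝ) (hℓ : ℓ ∈ Set.Ioo (0 : ℝ) 1)
    (z : ℝ) (hz : z ≠ 0) :
    ∫ θ in Set.Ioo (0 : ℝ) 1,
        Real.sqrt (ℓ / (2 * π * θ)) * Real.exp (-(ℓ * z ^ 2) / (2 * θ))
          * (θ ^ (ℓ / 2 - 1) * (1 - θ) ^ ((1 - ℓ) / 2 - 1)
              / realBeta (ℓ / 2) ((1 - ℓ) / 2))
      = (ℓ / 2) ^ (ℓ / 2) / Gamma (ℓ / 2) * |z| ^ (ℓ - 1)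
          * Real.exp (-(ℓ * z ^ 2) / 2) := by
  obtain ⟨hℓ0, hℓ1⟩ := hℓ
  have hq : 0 < (1 - ℓ) / 2 := by linarith
  rw [setIntegral_congr_fun measurableSet_Ioo fun θ hθ => scale_mixture_integrand_eq ℓ z _ hθ.1,
    integral_const_mul, integral_rpow_mul_one_sub_rpow_mul_exp_neg_div hq (by positivity),
    realBeta_of_add_eq_half (by ring)]
  have hc_rpow : (ℓ * z ^ 2 / 2) ^ ((1 - ℓ) / 2) = (ℓ / 2) ^ ((1 - ℓ) / 2) * |z| ^ (1 - ℓ) := by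
    rw [show ℓ * z ^ 2 / 2 = ℓ / 2 * |z| ^ (2 : ℝ) by rw [rpow_two, sq_abs]; ring,
      mul_rpow (by positivity) (by positivity), ← rpow_mul (abs_nonneg z)]
    ring_nf
  have hsqrt : √(ℓ / (2 * π)) = (ℓ / 2) ^ ((1 : ℝ) / 2) / √π := by
    rw [show ℓ / (2 * π) = ℓ / 2 / π by ring, sqrt_div' _ pi_pos.le, sqrt_eq_rpow]
  have hℓpow : (ℓ / 2) ^ (ℓ / 2) = (ℓ / 2) ^ ((1 : ℝ) / 2) / (ℓ / 2) ^ ((1 - ℓ) / 2) := by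
    rw [← rpow_sub (by positivity)]; ring_nf
  rw [hc_rpow, hsqrt, hℓpow, show ℓ - 1 = -(1 - ℓ) by ring, rpow_neg (abs_nonneg z),
    show -(ℓ * z ^ 2) / 2 = -(ℓ * z ^ 2 / 2) by ring]
  have hΓq : 0 < Gamma ((1 - ℓ) / 2) := Gamma_pos_of_pos hq
  have hz_rpow : 0 < |z| ^ (1 - ℓ) := by positivity
  field_simp
end

section
/- For every ℓ ∈ (0,1], a random variable with density f(·|ℓ) has mean zero, unit variance, and fourth moment 1 + 2/ℓ; that is, ∫_ℝ z·f(z|ℓ) dz = 0, ∫_ℝ z²·f(z|ℓ) dz = 1, and ∫_ℝ z⁴·f(z|ℓ) dz = 1 + 2/ℓ (in particular all these integrals are finite). -/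
/-!
The density is `c |z|^(ℓ-1) exp(-(ℓ/2) z²)` with `c = (ℓ/2)^(ℓ/2) / Γ(ℓ/2)`, so by the Gaussian
Gamma integral `∫ |z|^s exp(-b z²) = b^(-(s+1)/2) Γ((s+1)/2)` its absolute moments are
`∫ |z|^p f = Γ(ℓ/2 + p/2) / (Γ(ℓ/2) (ℓ/2)^(p/2))` for `p > -ℓ`. With `Γ(x+1) = x Γ(x)` this is
`1` for `p = 2` and `(ℓ/2 + 1)/(ℓ/2) = 1 + 2/ℓ` for `p = 4`; the first moment vanishes
because `f` is even.
-/

open Real MeasureTheory Set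

/-- The density `f(z | ℓ) = ((ℓ/2)^{ℓ/2}/Γ(ℓ/2)) |z|^{ℓ−1} exp(−ℓz²/2)` of the proposed
shrinkage prior. -/
noncomputable def shrinkageDensity (ℓ z : ℝ) : ℝ :=
  (ℓ / 2) ^ (ℓ / 2) / Gamma (ℓ / 2) * |z| ^ (ℓ - 1) * Real.exp (-(ℓ * z ^ 2) / 2)

theorem integrable_comp_abs_of_integrableOn_Ioi {E : Type*} [NormedAddCommGroup E] {f : ℝ → E}
    (hf : IntegrableOn f (Ioi 0)) : Integrable fun x => f |x| := by
  have hIoi : IntegrableOn (fun x => f |x|) (Ioi 0) :=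
    hf.congr_fun (fun x hx => by rw [abs_of_pos hx]) measurableSet_Ioi
  rw [← integrableOn_univ, ← Iic_union_Ioi (a := (0 : ℝ)), integrableOn_union]
  refine ⟨?_, hIoi⟩
  rw [← (Measure.measurePreserving_neg (volume : Measure ℝ)).integrableOn_comp_preimage
      (Homeomorph.neg ℝ).measurableEmbedding, neg_preimage, neg_Iic, neg_zero,
    integrableOn_Ici_iff_integrableOn_Ioi]
  simpa only [Function.comp_def, abs_neg] using hIoi

theorem integrable_abs_rpow_mul_exp_neg_mul_sq {b : ℝ} (hb : 0 < b) {s : ℝ} (hs : -1 < s) :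
    Integrable fun x : ℝ => |x| ^ s * exp (-b * x ^ 2) := by
  simpa only [sq_abs] using integrable_comp_abs_of_integrableOn_Ioi
    (f := fun y : ℝ => y ^ s * exp (-b * y ^ 2)) (integrableOn_rpow_mul_exp_neg_mul_sq hb hs)

theorem integral_abs_rpow_mul_exp_neg_mul_sq {b : ℝ} (hb : 0 < b) {s : ℝ} (hs : -1 < s) :
    ∫ x : ℝ, |x| ^ s * exp (-b * x ^ 2) = b ^ (-(s + 1) / 2) * Gamma ((s + 1) / 2) := by
  have h := integral_comp_abs (f := fun y : ℝ => y ^ s * exp (-b * y ^ 2))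
  have hIoi := integral_rpow_mul_exp_neg_mul_rpow two_pos hs hb
  simp only [sq_abs] at h
  simp only [rpow_two] at hIoi
  rw [h, hIoi]
  ring

theorem shrinkageDensity_nonneg {ℓ : ℝ} (hℓ : 0 < ℓ) (z : ℝ) : 0 ≤ shrinkageDensity ℓ z := by
  have := Gamma_pos_of_pos (half_pos hℓ)
  unfold shrinkageDensity
  positivity

theorem shrinkageDensity_neg (ℓ z : ℝ) : shrinkageDensity ℓ (-z) = shrinkageDensity ℓ z := by
  simp only [shrinkageDensity, abs_neg, neg_sq]

theorem measurable_shrinkageDensity (ℓ : ℝ) : Measurable (shrinkageDensity ℓ) := by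
  unfold shrinkageDensity
  fun_prop

/-- Only almost everywhere: at `z = 0` the two sides read `0 ^ p` and `0 ^ (p + ℓ - 1)`, which
may differ. -/
theorem abs_rpow_mul_shrinkageDensity_ae_eq (ℓ p : ℝ) :
    (fun z => |z| ^ p * shrinkageDensity ℓ z) =ᵐ[volume]
      fun z => (ℓ / 2) ^ (ℓ / 2) / Gamma (ℓ / 2) * (|z| ^ (p + ℓ - 1) * exp (-(ℓ / 2) * z ^ 2)) := by
  filter_upwards [compl_mem_ae_iff.mpr (measure_singleton (0 : ℝ))] with z hz
  rw [shrinkageDensity, add_sub_assoc, rpow_add (abs_pos.mpr hz)]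
  ring_nf

theorem integrable_abs_rpow_mul_shrinkageDensity {ℓ p : ℝ} (hℓ : 0 < ℓ) (hp : -ℓ < p) :
    Integrable fun z => |z| ^ p * shrinkageDensity ℓ z :=
  ((integrable_abs_rpow_mul_exp_neg_mul_sq (half_pos hℓ) (by linarith)).const_mul _).congr
    (abs_rpow_mul_shrinkageDensity_ae_eq ℓ p).symm

theorem integral_abs_rpow_mul_shrinkageDensity {ℓ p : ℝ} (hℓ : 0 < ℓ) (hp : -ℓ < p) :
    ∫ z, |z| ^ p * shrinkageDensity ℓ z
      = Gamma (ℓ / 2 + p / 2) / (Gamma (ℓ / 2) * (ℓ / 2) ^ (p / 2)) := by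
  have hb : 0 < ℓ / 2 := half_pos hℓ
  rw [integral_congr_ae (abs_rpow_mul_shrinkageDensity_ae_eq ℓ p), integral_const_mul,
    integral_abs_rpow_mul_exp_neg_mul_sq hb (by linarith),
    show -(p + ℓ - 1 + 1) / 2 = -(p / 2) + -(ℓ / 2) by ring, rpow_add hb, rpow_neg hb.le,
    rpow_neg hb.le, show (p + ℓ - 1 + 1) / 2 = ℓ / 2 + p / 2 by ring]
  have := Gamma_pos_of_pos hb
  field_simp

theorem integrable_pow_mul_shrinkageDensity_of_even {ℓ : ℝ} (hℓ : 0 < ℓ) {n : ℕ} (hn : Even n) :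
    Integrable fun z => z ^ n * shrinkageDensity ℓ z := by
  simpa only [rpow_natCast, hn.pow_abs] using
    integrable_abs_rpow_mul_shrinkageDensity (p := n) hℓ (by linarith [n.cast_nonneg (α := ℝ)])

theorem integral_pow_two_mul_mul_shrinkageDensity {ℓ : ℝ} (hℓ : 0 < ℓ) (k : ℕ) :
    ∫ z, z ^ (2 * k) * shrinkageDensity ℓ z
      = Gamma (ℓ / 2 + k) / (Gamma (ℓ / 2) * (ℓ / 2) ^ k) := by
  have h := integral_abs_rpow_mul_shrinkageDensity (p := (2 * k : ℕ)) hℓ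
    (by linarith [(2 * k).cast_nonneg (α := ℝ)])
  simp only [rpow_natCast, (even_two_mul k).pow_abs] at h
  rw [h]
  push_cast
  rw [mul_div_cancel_left₀ _ two_ne_zero, rpow_natCast]

theorem integrable_mul_shrinkageDensity {ℓ : ℝ} (hℓ : 0 < ℓ) :
    Integrable fun z => z * shrinkageDensity ℓ z := by
  refine (integrable_abs_rpow_mul_shrinkageDensity (p := 1) hℓ (by linarith)).mono'
    (measurable_id.mul (measurable_shrinkageDensity ℓ)).aestronglyMeasurable
    (Filter.Eventually.of_forall fun z => ?_)
  rw [rpow_one, norm_mul, Real.norm_eq_abs, Real.norm_of_nonneg (shrinkageDensity_nonneg hℓ z)]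

theorem integral_mul_shrinkageDensity (ℓ : ℝ) : ∫ z, z * shrinkageDensity ℓ z = 0 := by
  have h := integral_neg_eq_self (fun z => z * shrinkageDensity ℓ z) volume
  simp only [shrinkageDensity_neg, neg_mul, integral_neg] at h
  linarith

theorem integral_sq_mul_shrinkageDensity {ℓ : ℝ} (hℓ : 0 < ℓ) :
    ∫ z, z ^ 2 * shrinkageDensity ℓ z = 1 := by
  have h := integral_pow_two_mul_mul_shrinkageDensity hℓ 1
  have hG : Gamma (ℓ / 2) ≠ 0 := (Gamma_pos_of_pos (half_pos hℓ)).ne'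
  push_cast at h
  rw [h, Gamma_add_one (half_pos hℓ).ne']
  field_simp

theorem integral_pow_four_mul_shrinkageDensity {ℓ : ℝ} (hℓ : 0 < ℓ) :
    ∫ z, z ^ 4 * shrinkageDensity ℓ z = 1 + 2 / ℓ := by
  have h := integral_pow_two_mul_mul_shrinkageDensity hℓ 2
  have hG : Gamma (ℓ / 2) ≠ 0 := (Gamma_pos_of_pos (half_pos hℓ)).ne'
  push_cast at h
  rw [h, show ℓ / 2 + 2 = ℓ / 2 + 1 + 1 by ring, Gamma_add_one (by positivity),
    Gamma_add_one (half_pos hℓ).ne']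
  field_simp

/-- For every `ℓ ∈ (0,1]`, a random variable with density `f(·|ℓ)` has mean
zero, unit variance, and fourth moment `1 + 2/ℓ`; all of these moment integrals are finite. -/
theorem moments_shrinkageDensity (ℓ : ℝ) (hℓ : ℓ ∈ Set.Ioc (0 : ℝ) 1) :
    Integrable (fun z : ℝ => z * shrinkageDensity ℓ z) ∧
      (∫ z : ℝ, z * shrinkageDensity ℓ z) = 0 ∧
    Integrable (fun z : ℝ => z ^ 2 * shrinkageDensity ℓ z) ∧
      (∫ z : ℝ, z ^ 2 * shrinkageDensity ℓ z) = 1 ∧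
    Integrable (fun z : ℝ => z ^ 4 * shrinkageDensity ℓ z) ∧
      (∫ z : ℝ, z ^ 4 * shrinkageDensity ℓ z) = 1 + 2 / ℓ :=
  ⟨integrable_mul_shrinkageDensity hℓ.1, integral_mul_shrinkageDensity ℓ,
    integrable_pow_mul_shrinkageDensity_of_even hℓ.1 (by decide),
    integral_sq_mul_shrinkageDensity hℓ.1,
    integrable_pow_mul_shrinkageDensity_of_even hℓ.1 (by decide),
    integral_pow_four_mul_shrinkageDensity hℓ.1⟩
end
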